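/- Iterating the uniform fractal splitting converges to the pignistic transformation: for the operator T with (Tm)(F) = m(F)/(2^|F|−1) + Σ_{F⊊G} m(G)/(2^|G|−1), for every nonempty F with |F| ≥ 2 the iterates satisfy (T^k m)(F) → 0 as k → ∞, and for every singleton {θ}, (T^k m)({θ}) → BetP(θ) = Σ_{F ∋ θ} m(F)/|F|. -/

import Mathlib

open Finset Real Filter

/-- A basic probability assignment on the power set of a finite frame `Θ`. -/
noncomputable def IsBPA {Θ : Type*} [Fintype Θ] [DecidableEq Θ] (m : Finset Θ → ℝ) : Prop :=
  m ∅ = 0 ∧ (∀ F, 0 ≤ m F) ∧ ∑ F : Finset Θ, m F = 1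

/-- The fractal-based basic probability assignment:
`m_F(F) = m(F)/(2^|F|-1) + Σ_{F ⊊ G} m(G)/(2^|G|-1)`. -/
noncomputable def mF {Θ : Type*} [Fintype Θ] [DecidableEq Θ] (m : Finset Θ → ℝ) (F : Finset Θ) : ℝ :=
  m F / ((2 : ℝ) ^ F.card - 1) +
    ∑ G ∈ Finset.univ.filter (fun G : Finset Θ => F ⊂ G), m G / ((2 : ℝ) ^ G.card - 1)

/-- Fractal-based belief entropy: Shannon entropy of `m_F` over nonempty subsets. -/
noncomputable def EFB {Θ : Type*} [Fintype Θ] [DecidableEq Θ] (m : Finset Θ → ℝ) : ℝ :=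
  ∑ F ∈ Finset.univ.filter (fun F : Finset Θ => F.Nonempty), Real.negMulLog (mF m F)

/-- Pignistic probability transformation: `BetP(θ) = Σ_{θ ∈ F} m(F)/|F|`. -/
noncomputable def BetP {Θ : Type*} [Fintype Θ] [DecidableEq Θ] (m : Finset Θ → ℝ) (θ : Θ) : ℝ :=
  ∑ F ∈ Finset.univ.filter (fun F : Finset Θ => θ ∈ F), m F / (F.card : ℝ)

/-- Plausibility of a singleton: `Pl(θ) = Σ_{θ ∈ F} m(F)`. -/
noncomputable def Pl {Θ : Type*} [Fintype Θ] [DecidableEq Θ] (m : Finset Θ → ℝ) (θ : Θ) : ℝ :=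
  ∑ F ∈ Finset.univ.filter (fun F : Finset Θ => θ ∈ F), m F

/-!
`mF` is linear, and its transpose acts on a weight `w` on subsets by
`w ↦ (G ↦ (2^|G| - 1)⁻¹ ∑_{F ⊆ G} w F)`: each focal set `G` spreads its mass uniformly over its
`2^|G| - 1` nonempty subsets. For the pignistic weight `F ↦ [θ ∈ F] / |F|` this transpose is the
identity, because `∑_{θ ∈ F ⊆ G} 1/|F| = (2^|G| - 1)/|G|`; hence `BetP` is invariant under `mF`.
For the indicator of `|F| ≥ 2` it is at most `1 - 1/(2^|Θ| - 1)` times that indicator, since at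
most `2^|G| - 2` nonempty subsets of `G` are not singletons. So the (nonnegative) mass on
non-singletons decays geometrically, and as `BetP μ θ = μ {θ} + ∑_{θ ∈ F, |F| ≥ 2} μ F / |F|`,
the singleton masses converge to `BetP m θ`.
-/

lemma tendsto_zero_of_succ_le_mul {s : ℕ → ℝ} {c : ℝ} (hs0 : ∀ k, 0 ≤ s k) (hc0 : 0 ≤ c)
    (hc1 : c < 1) (hs : ∀ k, s (k + 1) ≤ c * s k) : Tendsto s atTop (nhds 0) := by
  have hgeom : ∀ k, s k ≤ s 0 * c ^ k := by
    intro k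
    induction k with
    | zero => simp
    | succ k ih => calc
        s (k + 1) ≤ c * s k := hs k
        _ ≤ c * (s 0 * c ^ k) := by gcongr
        _ = s 0 * c ^ (k + 1) := by ring
  refine squeeze_zero hs0 hgeom ?_
  simpa using (tendsto_pow_atTop_nhds_zero_of_lt_one hc0 hc1).const_mul (s 0)

lemma sum_powerset_inv_card_add_one {α : Type*} (s : Finset α) :
    ∑ t ∈ s.powerset, ((#t : ℝ) + 1)⁻¹ = (2 ^ (#s + 1) - 1) / (#s + 1) := by
  rw [sum_powerset_apply_card (fun j => ((j : ℝ) + 1)⁻¹)]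
  have hterm : ∀ j ∈ range (#s + 1),
      (#s).choose j • ((j : ℝ) + 1)⁻¹ = ((#s + 1).choose (j + 1) : ℝ) / (#s + 1) := by
    intro j _
    have h : ((#s + 1 : ℕ) * (#s).choose j : ℝ) = ((#s + 1).choose (j + 1) : ℕ) * (j + 1 : ℕ) := by
      exact_mod_cast Nat.add_one_mul_choose_eq (#s) j
    rw [nsmul_eq_mul]
    field_simp
    push_cast at h
    linarith
  rw [sum_congr rfl hterm, ← sum_div]
  have hpascal : ∑ j ∈ range (#s + 2), ((#s + 1).choose j : ℝ) = 2 ^ (#s + 1) := by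
    exact_mod_cast Nat.sum_range_choose (#s + 1)
  rw [sum_range_succ'] at hpascal
  simp only [Nat.choose_zero_right, Nat.cast_one] at hpascal
  rw [← hpascal]
  ring

lemma sum_powerset_ite_mem_inv_card {α : Type*} [DecidableEq α] (G : Finset α) (θ : α) :
    ∑ F ∈ G.powerset, (if θ ∈ F then (#F : ℝ)⁻¹ else 0)
      = if θ ∈ G then ((2 : ℝ) ^ #G - 1) / #G else 0 := by
  split_ifs with hθ
  · have hθ_erase : θ ∉ G.erase θ := notMem_erase θ G
    rw [← insert_erase hθ, sum_powerset_insert hθ_erase, insert_erase hθ, ← card_erase_add_one hθ,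
      Nat.cast_add_one, ← sum_powerset_inv_card_add_one]
    have hwithout : ∀ t ∈ (G.erase θ).powerset, θ ∉ t := fun t ht h => hθ_erase (mem_powerset.1 ht h)
    rw [sum_eq_zero fun t ht => if_neg (hwithout t ht), zero_add]
    refine sum_congr rfl fun t ht => ?_
    rw [if_pos (mem_insert_self θ t), card_insert_of_notMem (hwithout t ht), Nat.cast_add_one]
  · exact sum_eq_zero fun F hF => if_neg fun h => hθ (mem_powerset.1 hF h)

section

variable {Θ : Type*} [Fintype Θ] [DecidableEq Θ]

lemma mF_eq_sum_superset (m : Finset Θ → ℝ) (F : Finset Θ) :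
    mF m F = ∑ G with F ⊆ G, m G / (2 ^ #G - 1) := by
  have hsupersets : univ.filter (F ⊆ ·) = insert F (univ.filter (F ⊂ ·)) := by
    ext G
    simp only [mem_filter, mem_univ, true_and, mem_insert]
    exact (le_iff_eq_or_lt (a := F) (b := G)).trans (or_congr_left eq_comm)
  rw [hsupersets, sum_insert (by simp)]
  rfl

lemma sum_mul_mF (w m : Finset Θ → ℝ) :
    ∑ F, w F * mF m F = ∑ G, m G / (2 ^ #G - 1) * ∑ F ∈ G.powerset, w F := by
  simp_rw [mF_eq_sum_superset, mul_sum]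
  rw [sum_comm' (t' := univ) (s' := fun G => G.powerset) (by simp)]
  simp_rw [mul_comm]

lemma mF_nonneg {m : Finset Θ → ℝ} (hm : ∀ F, 0 ≤ m F) (F : Finset Θ) : 0 ≤ mF m F := by
  rw [mF_eq_sum_superset]
  exact sum_nonneg fun G _ => div_nonneg (hm G) (sub_nonneg.2 (one_le_pow₀ one_le_two))

lemma iterate_mF_nonneg {m : Finset Θ → ℝ} (hm : ∀ F, 0 ≤ m F) (k : ℕ) (F : Finset Θ) :
    0 ≤ (mF^[k] m) F := by
  induction k generalizing F with
  | zero => exact hm F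
  | succ k ih => rw [Function.iterate_succ_apply']; exact mF_nonneg ih F

lemma BetP_eq_sum_mul (μ : Finset Θ → ℝ) (θ : Θ) :
    BetP μ θ = ∑ F, (if θ ∈ F then (#F : ℝ)⁻¹ else 0) * μ F := by
  simp only [BetP, sum_filter, ite_mul, zero_mul, div_eq_inv_mul]

lemma BetP_mF (m : Finset Θ → ℝ) (θ : Θ) : BetP (mF m) θ = BetP m θ := by
  rw [BetP_eq_sum_mul, sum_mul_mF, BetP_eq_sum_mul]
  refine sum_congr rfl fun G _ => ?_
  rw [sum_powerset_ite_mem_inv_card]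
  split_ifs with hθ
  · have hpos : (1 : ℝ) < 2 ^ #G := one_lt_pow₀ one_lt_two (card_ne_zero_of_mem hθ)
    have : (2 : ℝ) ^ #G - 1 ≠ 0 := by linarith
    field_simp
  · simp

lemma BetP_iterate_mF (m : Finset Θ → ℝ) (θ : Θ) (k : ℕ) : BetP (mF^[k] m) θ = BetP m θ := by
  induction k with
  | zero => rfl
  | succ k ih => rw [Function.iterate_succ_apply', BetP_mF, ih]

lemma BetP_eq_apply_singleton_add (μ : Finset Θ → ℝ) (θ : Θ) :
    BetP μ θ = μ {θ} + ∑ F with θ ∈ F ∧ 2 ≤ #F, μ F / #F := by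
  have hsplit : univ.filter (θ ∈ ·) = insert {θ} (univ.filter fun F => θ ∈ F ∧ 2 ≤ #F) := by
    ext F
    simp only [mem_filter, mem_univ, true_and, mem_insert]
    constructor
    · intro hθ
      by_cases hF : 2 ≤ #F
      · exact Or.inr ⟨hθ, hF⟩
      · exact Or.inl (eq_singleton_iff_unique_mem.2 ⟨hθ, fun x hx =>
          card_le_one.1 (by omega) x hx θ hθ⟩)
    · rintro (rfl | ⟨hθ, -⟩)
      exacts [mem_singleton_self θ, hθ]
  rw [BetP, hsplit, sum_insert (by simp), card_singleton, Nat.cast_one, div_one]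

lemma card_filter_two_le_card_powerset_le {α : Type*} [DecidableEq α] {G : Finset α}
    (hG : G.Nonempty) : #{F ∈ G.powerset | 2 ≤ #F} ≤ 2 ^ #G - 2 := by
  obtain ⟨a, ha⟩ := hG
  have hsub : {F ∈ G.powerset | 2 ≤ #F} ⊆ (G.powerset.erase ∅).erase {a} := by
    intro F hF
    rw [mem_filter] at hF
    have hne : F ≠ ∅ := by rintro rfl; simp at hF
    have hne' : F ≠ {a} := by rintro rfl; simp at hF
    exact mem_erase.2 ⟨hne', mem_erase.2 ⟨hne, hF.1⟩⟩
  calc #{F ∈ G.powerset | 2 ≤ #F} ≤ #((G.powerset.erase ∅).erase {a}) := card_le_card hsub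
    _ = 2 ^ #G - 2 := by
      rw [card_erase_of_mem (mem_erase.2 ⟨singleton_ne_empty a,
          mem_powerset.2 (singleton_subset_iff.2 ha)⟩),
        card_erase_of_mem (empty_mem_powerset G), card_powerset]
      omega

def nonSingletonMass (μ : Finset Θ → ℝ) : ℝ := ∑ F with 2 ≤ #F, μ F

lemma nonSingletonMass_mF_le {m : Finset Θ → ℝ} (hm : ∀ F, 0 ≤ m F) :
    nonSingletonMass (mF m) ≤ (1 - ((2 : ℝ) ^ Fintype.card Θ - 1)⁻¹) * nonSingletonMass m := by
  have htranspose := sum_mul_mF (fun F => if 2 ≤ #F then 1 else 0) m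
  simp only [ite_mul, one_mul, zero_mul, ← sum_filter, sum_const, nsmul_one] at htranspose
  rw [nonSingletonMass, htranspose, nonSingletonMass, sum_filter, mul_sum]
  refine sum_le_sum fun G _ => ?_
  split_ifs with hG
  · have hcount : (#{F ∈ G.powerset | 2 ≤ #F} : ℝ) ≤ 2 ^ #G - 2 := by
      have h2 : 2 ≤ 2 ^ #G := Nat.le_self_pow (by omega) 2
      calc (#{F ∈ G.powerset | 2 ≤ #F} : ℝ) ≤ ((2 ^ #G - 2 : ℕ) : ℝ) := by
            exact_mod_cast card_filter_two_le_card_powerset_le (card_pos.1 (by omega))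
        _ = 2 ^ #G - 2 := by push_cast [Nat.cast_sub h2]; ring
    have hpow : (2 : ℝ) ^ #G ≤ 2 ^ Fintype.card Θ := pow_le_pow_right₀ one_le_two (card_le_univ G)
    have h3 : (3 : ℝ) ≤ 2 ^ #G - 1 := by
      have : (2 : ℝ) ^ 2 ≤ 2 ^ #G := pow_le_pow_right₀ one_le_two hG
      linarith
    calc m G / (2 ^ #G - 1) * #{F ∈ G.powerset | 2 ≤ #F}
        ≤ m G / (2 ^ #G - 1) * (2 ^ #G - 1 - 1) :=
          mul_le_mul_of_nonneg_left (by linarith) (div_nonneg (hm G) (by linarith))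
      _ = (1 - ((2 : ℝ) ^ #G - 1)⁻¹) * m G := by field_simp
      _ ≤ (1 - ((2 : ℝ) ^ Fintype.card Θ - 1)⁻¹) * m G := by gcongr; exact hm G
  · have hempty : {F ∈ G.powerset | 2 ≤ #F} = ∅ :=
      filter_eq_empty_iff.2 fun F hF h2 => hG (h2.trans (card_le_card (mem_powerset.1 hF)))
    simp [hempty]

lemma tendsto_nonSingletonMass_iterate_mF [Nonempty Θ] {m : Finset Θ → ℝ} (hm : ∀ F, 0 ≤ m F) :
    Tendsto (fun k => nonSingletonMass (mF^[k] m)) atTop (nhds 0) := by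
  have hN : (1 : ℝ) ≤ 2 ^ Fintype.card Θ - 1 := by
    have : (2 : ℝ) ^ 1 ≤ 2 ^ Fintype.card Θ := pow_le_pow_right₀ one_le_two Fintype.card_pos
    linarith
  refine tendsto_zero_of_succ_le_mul (c := 1 - ((2 : ℝ) ^ Fintype.card Θ - 1)⁻¹)
    (fun k => sum_nonneg fun F _ => iterate_mF_nonneg hm k F) ?_ ?_ fun k => ?_
  · linarith [inv_le_one_of_one_le₀ hN]
  · linarith [inv_pos.2 (zero_lt_one.trans_le hN)]
  · rw [Function.iterate_succ_apply']
    exact nonSingletonMass_mF_le (iterate_mF_nonneg hm k)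

lemma tendsto_iterate_mF_of_two_le_card {m : Finset Θ → ℝ} (hm : ∀ F, 0 ≤ m F) {F : Finset Θ}
    (hF : 2 ≤ #F) : Tendsto (fun k => (mF^[k] m) F) atTop (nhds 0) := by
  have : Nonempty Θ := (card_pos.1 (by omega : 0 < #F)).to_type
  refine squeeze_zero (fun k => iterate_mF_nonneg hm k F) (fun k => ?_)
    (tendsto_nonSingletonMass_iterate_mF hm)
  exact single_le_sum (fun G _ => iterate_mF_nonneg hm k G) (mem_filter.2 ⟨mem_univ F, hF⟩)

end

theorem fractal_iterates_tendsto_pignistic_general {Θ : Type*} [Fintype Θ] [DecidableEq Θ]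
    (m : Finset Θ → ℝ) (hm : IsBPA m) :
    (∀ F : Finset Θ, 2 ≤ F.card →
        Filter.Tendsto (fun k => (mF^[k] m) F) Filter.atTop (nhds 0)) ∧
      (∀ θ : Θ, Filter.Tendsto (fun k => (mF^[k] m) {θ}) Filter.atTop (nhds (BetP m θ))) := by
  have hnonsingleton : ∀ F : Finset Θ, 2 ≤ #F → Tendsto (fun k => (mF^[k] m) F) atTop (nhds 0) :=
    fun F hF => tendsto_iterate_mF_of_two_le_card hm.2.1 hF
  refine ⟨hnonsingleton, fun θ => ?_⟩
  have hrest : Tendsto (fun k => ∑ F with θ ∈ F ∧ 2 ≤ #F, (mF^[k] m) F / #F) atTop (nhds 0) := by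
    simpa using tendsto_finsetSum _ fun F hF => (hnonsingleton F (mem_filter.1 hF).2.2).div_const _
  have hsingleton : ∀ k, (mF^[k] m) {θ} = BetP m θ - ∑ F with θ ∈ F ∧ 2 ≤ #F, (mF^[k] m) F / #F :=
    fun k => by rw [← BetP_iterate_mF m θ k, BetP_eq_apply_singleton_add]; ring
  simpa [hsingleton] using hrest.const_sub (BetP m θ)

theorem fractal_iterates_tendsto_pignistic {Θ : Type*} [Fintype Θ] [DecidableEq Θ] [Nonempty Θ]
    (m : Finset Θ → ℝ) (hm : IsBPA m) :
    (∀ F : Finset Θ, 2 ≤ F.card →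
        Filter.Tendsto (fun k => (mF^[k] m) F) Filter.atTop (nhds 0)) ∧
      (∀ θ : Θ, Filter.Tendsto (fun k => (mF^[k] m) {θ}) Filter.atTop (nhds (BetP m θ))) :=
  fractal_iterates_tendsto_pignistic_general m hm
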